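/- Let G be the graph on vertex set {a, b, c, d, e, a', b'} consisting of the 5-cycle a–b–c–d–e–a together with pendant edges a–a' and b–b'. Then S = {a', b', d} is the unique MEG-set of G of minimum cardinality (so meg(G) = 3), and T = {a', b', c, e} is also a minimal MEG-set of G (an MEG-set none of whose proper subsets is an MEG-set); in particular G has a unique minimum MEG-set but not a unique minimal MEG-set. -/

import Mathlib

/-!
Deleting a pendant edge changes only the distances to its leaf, so `a'` and `b'` lie in every
MEG-set. The edge `cd` is monitored only by the pairs `{c, d}`, `{b, d}`, `{b', d}` and `{c, e}`,
so every MEG-set contains `S = {a', b', d}` or `T = {a', b', c, e}`; conversely both are MEG-sets.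
Thus the MEG-sets are exactly the supersets of `S` or of `T`, and everything follows from
`|S| < |T|` and the incomparability of `S` and `T`. The facts about the concrete graph are
checked by `decide`, deciding distances by searching walks of bounded length.
-/

open SimpleGraph

/-- `S` is a monitoring edge-geodetic set (MEG-set) of `G`: for every edge `e` of `G`
there are `x, y ∈ S` whose distance in `G − e` differs from their distance in `G`
(including the case that they become disconnected in `G − e`). -/
def IsMEGSet {V : Type*} (G : SimpleGraph V) (S : Set V) : Prop :=
  ∀ e ∈ G.edgeSet, ∃ x ∈ S, ∃ y ∈ S,
    ¬ (G.deleteEdges {e}).Reachable x y ∨ (G.deleteEdges {e}).dist x y ≠ G.dist x y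

/-- The monitoring edge-geodetic number: the minimum cardinality of an MEG-set. -/
noncomputable def meg {V : Type*} [Fintype V] (G : SimpleGraph V) : ℕ :=
  sInf {n | ∃ S : Set V, IsMEGSet G S ∧ S.ncard = n}

/-- The strong product `G ⊠ H` of two simple graphs: `(a,b)` adjacent to `(c,d)` iff
`a = c` and `bd ∈ E(H)`, or `b = d` and `ac ∈ E(G)`, or `ac ∈ E(G)` and `bd ∈ E(H)`. -/
def strongProd {α β : Type*} (G : SimpleGraph α) (H : SimpleGraph β) :
    SimpleGraph (α × β) where
  Adj x y := (x.1 = y.1 ∧ H.Adj x.2 y.2) ∨ (x.2 = y.2 ∧ G.Adj x.1 y.1) ∨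
    (G.Adj x.1 y.1 ∧ H.Adj x.2 y.2)
  symm := ⟨fun x y => by
    rintro (⟨h1, h2⟩ | ⟨h1, h2⟩ | ⟨h1, h2⟩)
    · exact Or.inl ⟨h1.symm, h2.symm⟩
    · exact Or.inr (Or.inl ⟨h1.symm, h2.symm⟩)
    · exact Or.inr (Or.inr ⟨h1.symm, h2.symm⟩)⟩
  loopless := ⟨fun x => by
    rintro (⟨_, h⟩ | ⟨_, h⟩ | ⟨h, _⟩)
    · exact H.loopless.irrefl _ h
    · exact G.loopless.irrefl _ h
    · exact G.loopless.irrefl _ h⟩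

infixl:70 " ⊠ " => strongProd

/-- The graph on vertices `0,…,6` (with `a = 0`, `b = 1`, `c = 2`, `d = 3`, `e = 4`,
`a' = 5`, `b' = 6`) given by the 5-cycle `a b c d e` plus pendant edges `a a'`, `b b'`. -/
def pendantCycleGraph : SimpleGraph (Fin 7) :=
  SimpleGraph.fromEdgeSet
    {s(0, 1), s(1, 2), s(2, 3), s(3, 4), s(4, 0), s(0, 5), s(1, 6)}

namespace SimpleGraph

variable {V : Type*} {G H : SimpleGraph V} {x y : V}

theorem exists_walk_length_le_zero_iff : (∃ w : G.Walk x y, w.length ≤ 0) ↔ x = y := by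
  refine ⟨fun ⟨w, hw⟩ => w.eq_of_length_eq_zero (Nat.le_zero.mp hw), ?_⟩
  rintro rfl
  exact ⟨.nil, le_rfl⟩

theorem exists_walk_length_le_succ_iff {k : ℕ} : (∃ w : G.Walk x y, w.length ≤ k + 1) ↔
    x = y ∨ ∃ z, G.Adj x z ∧ ∃ w : G.Walk z y, w.length ≤ k := by
  constructor
  · rintro ⟨_ | ⟨h, w⟩, hw⟩
    · exact .inl rfl
    · exact .inr ⟨_, h, w, by simpa using hw⟩
  · rintro (rfl | ⟨z, h, w, hw⟩)
    · exact ⟨.nil, by simp⟩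
    · exact ⟨.cons h w, by simpa using hw⟩

instance decidableExistsWalkLengthLe [Fintype V] [DecidableEq V] [DecidableRel G.Adj] :
    ∀ k x y, Decidable (∃ w : G.Walk x y, w.length ≤ k)
  | 0, _, _ => decidable_of_iff _ exists_walk_length_le_zero_iff.symm
  | k + 1, _, y =>
    have := fun z => decidableExistsWalkLengthLe k z y
    decidable_of_iff _ exists_walk_length_le_succ_iff.symm

theorem Reachable.dist_lt_card [Fintype V] (hr : G.Reachable x y) :
    G.dist x y < Fintype.card V := by
  obtain ⟨p, hp, hlen⟩ := hr.exists_path_of_dist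
  exact hlen ▸ hp.length_lt

theorem reachable_and_dist_eq_iff [Fintype V] (hHG : H ≤ G) :
    H.Reachable x y ∧ H.dist x y = G.dist x y ↔
      ∃ k < Fintype.card V, (∃ w : H.Walk x y, w.length ≤ k) ∧
        ∀ j < k, ¬ ∃ w : G.Walk x y, w.length ≤ j := by
  constructor
  · rintro ⟨hH, hdist⟩
    obtain ⟨w, hw⟩ := hH.exists_walk_length_eq_dist
    refine ⟨_, hH.dist_lt_card, ⟨w, hw.le⟩, fun j hj ⟨v, hv⟩ => ?_⟩
    have := dist_le v
    omega
  · rintro ⟨k, -, ⟨w, hw⟩, hG⟩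
    have hH : H.Reachable x y := ⟨w⟩
    obtain ⟨v, hv⟩ := (hH.mono hHG).exists_walk_length_eq_dist
    have hk : k ≤ G.dist x y := not_lt.mp fun h => hG _ h ⟨v, hv.le⟩
    exact ⟨hH, le_antisymm (((dist_le w).trans hw).trans hk) (hH.dist_anti hHG)⟩

def Monitors (G : SimpleGraph V) (e : Sym2 V) (x y : V) : Prop :=
  ¬ (G.deleteEdges {e}).Reachable x y ∨ (G.deleteEdges {e}).dist x y ≠ G.dist x y

theorem not_monitors_iff {e : Sym2 V} : ¬ G.Monitors e x y ↔
    (G.deleteEdges {e}).Reachable x y ∧ (G.deleteEdges {e}).dist x y = G.dist x y := by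
  rw [Monitors, not_or, not_not, not_not]

instance [Fintype V] [DecidableEq V] [DecidableRel G.Adj] (e : Sym2 V) (x y : V) :
    Decidable (G.Monitors e x y) :=
  decidable_of_iff _ <| not_iff_comm.1 <|
    not_monitors_iff.trans (reachable_and_dist_eq_iff (deleteEdges_le _))

end SimpleGraph

section MEGSet

variable {V : Type*} {G : SimpleGraph V} {S T : Set V}

theorem isMEGSet_iff_forall_adj :
    IsMEGSet G S ↔ ∀ x y, G.Adj x y → ∃ u ∈ S, ∃ v ∈ S, G.Monitors s(x, y) u v := by
  simp only [IsMEGSet, Sym2.forall, mem_edgeSet]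
  rfl

theorem IsMEGSet.mono (hST : S ⊆ T) (hS : IsMEGSet G S) : IsMEGSet G T := fun e he =>
  let ⟨x, hx, y, hy, h⟩ := hS e he
  ⟨x, hST hx, y, hST hy, h⟩

theorem IsMEGSet.mem_of_forall_monitors {e : Sym2 V} {v : V} (hS : IsMEGSet G S)
    (he : e ∈ G.edgeSet) (h : ∀ x y, G.Monitors e x y → x = v ∨ y = v) : v ∈ S := by
  obtain ⟨x, hx, y, hy, hxy⟩ := hS e he
  rcases h x y hxy with rfl | rfl
  exacts [hx, hy]

theorem meg_eq_ncard [Fintype V] (hS : IsMEGSet G S)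
    (hmin : ∀ R, IsMEGSet G R → S.ncard ≤ R.ncard) : meg G = S.ncard :=
  le_antisymm (Nat.sInf_le ⟨S, hS, rfl⟩) <|
    le_csInf ⟨_, S, hS, rfl⟩ fun _ ⟨R, hR, hn⟩ => hn ▸ hmin R hR

end MEGSet

instance : DecidableRel pendantCycleGraph.Adj := fun x y =>
  decidable_of_iff (s(x, y) ∈ ({s(0, 1), s(1, 2), s(2, 3), s(3, 4), s(4, 0), s(0, 5), s(1, 6)} :
    Finset (Sym2 (Fin 7))) ∧ x ≠ y) (by simp [pendantCycleGraph])

theorem pendantCycleGraph_monitors_s05 :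
    ∀ x y, pendantCycleGraph.Monitors s(0, 5) x y → x = 5 ∨ y = 5 := by decide

theorem pendantCycleGraph_monitors_s16 :
    ∀ x y, pendantCycleGraph.Monitors s(1, 6) x y → x = 6 ∨ y = 6 := by decide

theorem pendantCycleGraph_monitors_s23 :
    ∀ x y, pendantCycleGraph.Monitors s(2, 3) x y → x = 3 ∨ y = 3 ∨ s(x, y) = s(2, 4) := by
  decide

theorem isMEGSet_pendantCycleGraph_five_six_three :
    IsMEGSet pendantCycleGraph ({5, 6, 3} : Set (Fin 7)) :=
  isMEGSet_iff_forall_adj.2 (by decide)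

theorem isMEGSet_pendantCycleGraph_five_six_two_four :
    IsMEGSet pendantCycleGraph ({5, 6, 2, 4} : Set (Fin 7)) :=
  isMEGSet_iff_forall_adj.2 (by decide)

theorem isMEGSet_pendantCycleGraph_iff {R : Set (Fin 7)} :
    IsMEGSet pendantCycleGraph R ↔ {5, 6, 3} ⊆ R ∨ {5, 6, 2, 4} ⊆ R := by
  refine ⟨fun hR => ?_, ?_⟩
  · have h5 := hR.mem_of_forall_monitors (by decide) pendantCycleGraph_monitors_s05
    have h6 := hR.mem_of_forall_monitors (by decide) pendantCycleGraph_monitors_s16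
    obtain ⟨x, hx, y, hy, hxy⟩ := hR s(2, 3) (by decide)
    simp only [Set.insert_subset_iff, Set.singleton_subset_iff, h5, h6, true_and]
    rcases pendantCycleGraph_monitors_s23 x y hxy with rfl | rfl | h24
    · exact .inl hx
    · exact .inl hy
    · rcases Sym2.eq_iff.1 h24 with ⟨rfl, rfl⟩ | ⟨rfl, rfl⟩
      exacts [.inr ⟨hx, hy⟩, .inr ⟨hy, hx⟩]
  · rintro (h | h)
    exacts [isMEGSet_pendantCycleGraph_five_six_three.mono h,
      isMEGSet_pendantCycleGraph_five_six_two_four.mono h]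

theorem pendantCycle_unique_minimum_not_unique_minimal :
    IsMEGSet pendantCycleGraph ({5, 6, 3} : Set (Fin 7)) ∧
    meg pendantCycleGraph = 3 ∧
    (∀ R : Set (Fin 7), IsMEGSet pendantCycleGraph R → R.ncard = 3 →
      R = ({5, 6, 3} : Set (Fin 7))) ∧
    IsMEGSet pendantCycleGraph ({5, 6, 2, 4} : Set (Fin 7)) ∧
    (∀ R : Set (Fin 7), R ⊂ ({5, 6, 2, 4} : Set (Fin 7)) →
      ¬ IsMEGSet pendantCycleGraph R) ∧
    ¬ ∃ S₀ : Set (Fin 7), IsMEGSet pendantCycleGraph S₀ ∧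
      ∀ R : Set (Fin 7), IsMEGSet pendantCycleGraph R → S₀ ⊆ R := by
  set S : Set (Fin 7) := {5, 6, 3}
  set T : Set (Fin 7) := {5, 6, 2, 4}
  have hiff : ∀ R, IsMEGSet pendantCycleGraph R ↔ S ⊆ R ∨ T ⊆ R := fun _ =>
    isMEGSet_pendantCycleGraph_iff
  have hSmeg : IsMEGSet pendantCycleGraph S := (hiff S).2 (.inl subset_rfl)
  have hTmeg : IsMEGSet pendantCycleGraph T := (hiff T).2 (.inr subset_rfl)
  have hS : S.ncard = 3 := by simp [S, Set.ncard_insert_of_notMem]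
  have hT : T.ncard = 4 := by simp [T, Set.ncard_insert_of_notMem]
  have hST : ¬ S ⊆ T := fun h => by simpa [T] using h (show (3 : Fin 7) ∈ S by simp [S])
  have hTS : ¬ T ⊆ S := fun h => by simpa [S] using h (show (2 : Fin 7) ∈ T by simp [T])
  have hmin : ∀ R, IsMEGSet pendantCycleGraph R → S.ncard ≤ R.ncard := fun R hR => by
    rcases (hiff R).1 hR with h | h
    · exact Set.ncard_le_ncard h
    · have := Set.ncard_le_ncard h
      omega
  refine ⟨hSmeg, hS ▸ meg_eq_ncard hSmeg hmin, fun R hR hR3 => ?_, hTmeg,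
    fun R hRT hR => ?_, ?_⟩
  · rcases (hiff R).1 hR with h | h
    · exact (Set.eq_of_subset_of_ncard_le h (by omega)).symm
    · have := Set.ncard_le_ncard h
      omega
  · rcases (hiff R).1 hR with h | h
    exacts [hST (h.trans hRT.subset), hRT.not_subset h]
  · rintro ⟨S₀, hS₀, hle⟩
    rcases (hiff S₀).1 hS₀ with h | h
    exacts [hST (h.trans (hle T hTmeg)), hTS (h.trans (hle S hSmeg))]
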